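/- arXiv:1810.10030 — 3 statements merged into one kernel-verified Lean document; each statement's English description precedes it below -/
import Mathlib

section
/- Let V be a nontrivial real Banach space, a ∈ ℝ, b ∈ [a,∞), s ∈ [a,b], f : [a,b] × V → V continuous, and X, Y : [a,b] → V continuous functions satisfying X_t − ∫_s^t f(τ, X_τ) dτ = Y_t − ∫_s^t f(τ, Y_τ) dτ for all t ∈ [a,b]. Assume f is locally Lipschitz in the second variable, uniformly in time: for every x ∈ V there exists r > 0 such that sup over τ ∈ [a,b] and y, z in the closed r-ball around x with y ≠ z of ‖f(τ,y) − f(τ,z)‖/‖y − z‖ is finite. Then X_t = Y_t for all t ∈ [a,b]. -/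
open MeasureTheory Metric Set Filter Topology
open scoped NNReal Interval

/-!
Put `D = X - Y` and `g τ = f(τ, X τ) - f(τ, Y τ)`, so that `D t = ∫_{t₀}^t g` whenever
`D t₀ = 0`. Near such a `t₀` both curves stay in a ball on which `f` is `K`-Lipschitz, so
`‖g‖ ≤ K ‖D‖` there, and on an interval of length `ℓ` around `t₀` with `K ℓ < 1` the maximum `M`
of `‖D‖` satisfies `M ≤ K ℓ M`, i.e. `M = 0`. Hence `{X = Y}` is relatively open in `[a, b]`; it
is relatively closed by continuity and contains `s`, so it is all of `[a, b]`.
-/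

theorem IsPreconnected.forall_of_eventually_iff {α : Type*} [TopologicalSpace α] {s : Set α}
    (hs : IsPreconnected s) {p : α → Prop} (hp : ∀ x ∈ s, ∀ᶠ y in 𝓝[s] x, p x ↔ p y)
    {x₀ : α} (hx₀ : x₀ ∈ s) (h₀ : p x₀) : ∀ x ∈ s, p x :=
  fun _ hx ↦ (hs.induction₂ (fun x y ↦ p x ↔ p y) hp (fun _ _ _ _ _ _ ↦ Iff.trans)
    (fun _ _ _ _ ↦ Iff.symm) hx₀ hx).mp h₀

section

variable {V : Type*} [NormedAddCommGroup V] [NormedSpace ℝ V]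

theorem eqOn_zero_of_norm_le_integral {D g : ℝ → V} {c d t₀ : ℝ} {K : ℝ≥0}
    (ht₀ : t₀ ∈ Icc c d) (hD : ContinuousOn D (Icc c d))
    (hDg : ∀ t ∈ Icc c d, D t = ∫ τ in t₀..t, g τ)
    (hg : ∀ τ ∈ Icc c d, ‖g τ‖ ≤ K * ‖D τ‖) (hK : K * (d - c) < 1) :
    ∀ t ∈ Icc c d, D t = 0 := by
  obtain ⟨t₁, ht₁, hmax⟩ := isCompact_Icc.exists_isMaxOn ⟨t₀, ht₀⟩ hD.norm
  set M := ‖D t₁‖ with hM_def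
  have hgM : ∀ τ ∈ Ι t₀ t₁, ‖g τ‖ ≤ K * M := fun τ hτ ↦
    have hτ' : τ ∈ Icc c d := ordConnected_Icc.uIcc_subset ht₀ ht₁ (uIoc_subset_uIcc hτ)
    (hg τ hτ').trans (mul_le_mul_of_nonneg_left (hmax hτ') K.coe_nonneg)
  have hdist : |t₁ - t₀| ≤ d - c := abs_sub_le_of_le_of_le ht₁.1 ht₁.2 ht₀.1 ht₀.2
  have hM : M ≤ K * (d - c) * M := calc
    M = ‖∫ τ in t₀..t₁, g τ‖ := by rw [hM_def, hDg t₁ ht₁]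
    _ ≤ K * M * |t₁ - t₀| := intervalIntegral.norm_integral_le_of_norm_le_const hgM
    _ ≤ K * M * (d - c) := by gcongr
    _ = K * (d - c) * M := by ring
  have hM0 : M = 0 := by nlinarith [norm_nonneg (D t₁)]
  intro t ht
  exact norm_le_zero_iff.mp (hM0 ▸ hmax ht)

theorem eventually_eq_zero_of_norm_le_integral {D g : ℝ → V} {a b t₀ : ℝ} {K : ℝ≥0}
    (ht₀ : t₀ ∈ Icc a b) (hD : ContinuousOn D (Icc a b))
    (hDg : ∀ t ∈ Icc a b, D t = ∫ τ in t₀..t, g τ)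
    (hg : ∀ᶠ τ in 𝓝[Icc a b] t₀, ‖g τ‖ ≤ K * ‖D τ‖) :
    ∀ᶠ t in 𝓝[Icc a b] t₀, D t = 0 := by
  obtain ⟨ε, hε, hεg⟩ := mem_nhdsWithin_iff.mp hg
  have hsmall : ∀ᶠ δ in 𝓝 (0 : ℝ), δ < ε ∧ 2 * K * δ < 1 :=
    (eventually_lt_nhds hε).and <| (continuous_const.mul continuous_id).tendsto' 0 0 (by simp)
      |>.eventually (eventually_lt_nhds one_pos)
  obtain ⟨δ, ⟨hδε, hKδ⟩, hδ⟩ := ((hsmall.filter_mono nhdsWithin_le_nhds).and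
    (self_mem_nhdsWithin (s := Ioi 0))).exists
  set J := Icc (max a (t₀ - δ)) (min b (t₀ + δ))
  have hJ : Icc a b ∩ closedBall t₀ δ = J := by
    rw [Real.closedBall_eq_Icc, Icc_inter_Icc]
  have hJI : J ⊆ Icc a b := hJ ▸ inter_subset_left
  have hKJ : K * (min b (t₀ + δ) - max a (t₀ - δ)) < 1 := calc
    _ ≤ K * (2 * δ) := by gcongr; linarith [min_le_right b (t₀ + δ), le_max_right a (t₀ - δ)]
    _ = 2 * K * δ := by ring
    _ < 1 := hKδ
  have hgJ : ∀ τ ∈ J, ‖g τ‖ ≤ K * ‖D τ‖ := fun τ hτ ↦ by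
    rw [← hJ] at hτ
    exact hεg ⟨(mem_closedBall.mp hτ.2).trans_lt hδε, hτ.1⟩
  have hzero := eqOn_zero_of_norm_le_integral (hJ.subset ⟨ht₀, mem_closedBall_self hδ.le⟩)
    (hD.mono hJI) (fun t ht ↦ hDg t (hJI ht)) hgJ hKJ
  filter_upwards [inter_mem_nhdsWithin (Icc a b) (closedBall_mem_nhds t₀ hδ)] with t ht
  exact hzero t (hJ.subset ht)

end

theorem eventually_norm_sub_le_of_lipschitzOn_closedBall {V : Type*} [NormedAddCommGroup V]
    {f : ℝ → V → V} {I : Set ℝ} {X Y : ℝ → V} {t₀ r C : ℝ} (hr : 0 < r)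
    (hC : ∀ τ ∈ I, ∀ y z : V, ‖X t₀ - y‖ ≤ r → ‖X t₀ - z‖ ≤ r →
      ‖f τ y - f τ z‖ ≤ C * ‖y - z‖)
    (hX : ContinuousWithinAt X I t₀) (hY : ContinuousWithinAt Y I t₀) (h₀ : X t₀ = Y t₀) :
    ∀ᶠ τ in 𝓝[I] t₀, ‖f τ (X τ) - f τ (Y τ)‖ ≤ C.toNNReal * ‖X τ - Y τ‖ := by
  filter_upwards [hX.eventually (closedBall_mem_nhds _ hr),
    h₀ ▸ hY.eventually (closedBall_mem_nhds _ hr), self_mem_nhdsWithin] with τ hXτ hYτ hτ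
  rw [dist_comm, dist_eq_norm] at hXτ hYτ
  exact (hC τ hτ _ _ hXτ hYτ).trans
    (mul_le_mul_of_nonneg_right (Real.le_coe_toNNReal C) (norm_nonneg _))

theorem eventually_eq_of_sub_eq_integral {V : Type*} [NormedAddCommGroup V] [NormedSpace ℝ V]
    {f : ℝ → V → V} {X Y : ℝ → V} {a b s t₀ : ℝ} (hs : s ∈ Icc a b) (ht₀ : t₀ ∈ Icc a b)
    (hX : ContinuousOn X (Icc a b)) (hY : ContinuousOn Y (Icc a b))
    (hint : ∀ u ∈ Icc a b, ∀ v ∈ Icc a b,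
      IntervalIntegrable (fun τ ↦ f τ (X τ) - f τ (Y τ)) volume u v)
    (hDs : ∀ t ∈ Icc a b, X t - Y t = ∫ τ in s..t, f τ (X τ) - f τ (Y τ))
    (hlip : ∃ r : ℝ, 0 < r ∧ ∃ C : ℝ, ∀ τ ∈ Icc a b, ∀ y z : V,
      ‖X t₀ - y‖ ≤ r → ‖X t₀ - z‖ ≤ r → ‖f τ y - f τ z‖ ≤ C * ‖y - z‖)
    (h₀ : X t₀ = Y t₀) :
    ∀ᶠ t in 𝓝[Icc a b] t₀, X t = Y t := by
  obtain ⟨r, hr, C, hC⟩ := hlip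
  have hDt₀ : ∀ t ∈ Icc a b, X t - Y t = ∫ τ in t₀..t, f τ (X τ) - f τ (Y τ) := fun t ht ↦ by
    rw [← intervalIntegral.integral_interval_sub_left (hint s hs t ht) (hint s hs t₀ ht₀),
      ← hDs t ht, ← hDs t₀ ht₀, h₀, sub_self, sub_zero]
  filter_upwards [eventually_eq_zero_of_norm_le_integral ht₀ (hX.sub hY) hDt₀
    (eventually_norm_sub_le_of_lipschitzOn_closedBall hr hC (hX t₀ ht₀) (hY t₀ ht₀) h₀)]
    with t ht
  exact sub_eq_zero.mp ht

theorem ode_uniqueness_general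
    {V : Type*} [NormedAddCommGroup V] [NormedSpace ℝ V]
    {a b s : ℝ} (hs : s ∈ Set.Icc a b)
    (f : ℝ → V → V)
    (hf : ContinuousOn (fun p : ℝ × V => f p.1 p.2) (Set.Icc a b ×ˢ Set.univ))
    (X Y : ℝ → V) (hX : ContinuousOn X (Set.Icc a b)) (hY : ContinuousOn Y (Set.Icc a b))
    (heq : ∀ t ∈ Set.Icc a b,
      X t - ∫ τ in s..t, f τ (X τ) = Y t - ∫ τ in s..t, f τ (Y τ))
    (hlip : ∀ x : V, ∃ r : ℝ, 0 < r ∧ ∃ C : ℝ,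
      ∀ τ ∈ Set.Icc a b, ∀ y z : V, ‖x - y‖ ≤ r → ‖x - z‖ ≤ r →
        ‖f τ y - f τ z‖ ≤ C * ‖y - z‖) :
    ∀ t ∈ Set.Icc a b, X t = Y t := by
  have hint : ∀ Z : ℝ → V, ContinuousOn Z (Icc a b) → ∀ u ∈ Icc a b, ∀ v ∈ Icc a b,
      IntervalIntegrable (fun τ ↦ f τ (Z τ)) volume u v := fun Z hZ u hu v hv ↦
    ((hf.comp (continuousOn_id.prodMk hZ) fun t ht ↦ ⟨ht, trivial⟩).mono
      (uIcc_subset_Icc hu hv)).intervalIntegrable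
  have hgint : ∀ u ∈ Icc a b, ∀ v ∈ Icc a b,
      IntervalIntegrable (fun τ ↦ f τ (X τ) - f τ (Y τ)) volume u v :=
    fun u hu v hv ↦ (hint X hX u hu v hv).sub (hint Y hY u hu v hv)
  have hDs : ∀ t ∈ Icc a b, X t - Y t = ∫ τ in s..t, f τ (X τ) - f τ (Y τ) := fun t ht ↦ by
    rw [intervalIntegral.integral_sub (hint X hX s hs t ht) (hint Y hY s hs t ht)]
    exact sub_eq_sub_iff_sub_eq_sub.mp (heq t ht)
  refine isPreconnected_Icc.forall_of_eventually_iff (fun t₀ ht₀ ↦ ?_) hs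
    (by simpa using heq s hs)
  by_cases h₀ : X t₀ = Y t₀
  · filter_upwards [eventually_eq_of_sub_eq_integral hs ht₀ hX hY hgint hDs (hlip (X t₀)) h₀]
      with t ht
    exact iff_of_true h₀ ht
  · filter_upwards [((hX t₀ ht₀).sub (hY t₀ ht₀)).eventually_ne (sub_ne_zero.mpr h₀)]
      with t ht
    exact iff_of_false h₀ (sub_ne_zero.mp ht)

/-- Uniqueness for ODE integral equations: if `f` is continuous on
`[a,b] × V` and locally Lipschitz in the second variable uniformly in time, and
`X, Y : [a,b] → V` are continuous with
`X_t - ∫_s^t f(τ, X_τ) dτ = Y_t - ∫_s^t f(τ, Y_τ) dτ` for all `t ∈ [a,b]`,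
then `X = Y` on `[a,b]`. -/
theorem ode_uniqueness
    {V : Type*} [NormedAddCommGroup V] [NormedSpace ℝ V] [CompleteSpace V]
    [Nontrivial V] {a b s : ℝ} (hab : a ≤ b) (hs : s ∈ Set.Icc a b)
    (f : ℝ → V → V)
    (hf : ContinuousOn (fun p : ℝ × V => f p.1 p.2) (Set.Icc a b ×ˢ Set.univ))
    (X Y : ℝ → V) (hX : ContinuousOn X (Set.Icc a b)) (hY : ContinuousOn Y (Set.Icc a b))
    (heq : ∀ t ∈ Set.Icc a b,
      X t - ∫ τ in s..t, f τ (X τ) = Y t - ∫ τ in s..t, f τ (Y τ))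
    (hlip : ∀ x : V, ∃ r : ℝ, 0 < r ∧ ∃ C : ℝ,
      ∀ τ ∈ Set.Icc a b, ∀ y z : V, ‖x - y‖ ≤ r → ‖x - z‖ ≤ r →
        ‖f τ y - f τ z‖ ≤ C * ‖y - z‖) :
    ∀ t ∈ Set.Icc a b, X t = Y t :=
  ode_uniqueness_general hs f hf X Y hX hY heq hlip
end

section
/- Let V be a nontrivial real Banach space, T ∈ (0,∞), ∠_T = {(s,t) ∈ [0,T]² : s ≤ t}, f ∈ C^{0,1}([0,T] × V, V) with spatial derivative f_{0,1}, and let F : C(∠_T, V) → C(∠_T, V) be defined by (F(y))(s,t) = ∫_s^t f(τ, y(s,τ)) dτ. Then F is continuously Fréchet differentiable, and for all y, h ∈ C(∠_T, V) and (s,t) ∈ ∠_T, (F'(y)h)(s,t) = ∫_s^t f_{0,1}(τ, y(s,τ)) h(s,τ) dτ. -/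
/-! The operator factors as `F = J ∘ N`, where `N y = f(·, y(·))` is the superposition operator
on `C(∠_T, V)` and `J g (s, t) = ∫_s^t g(s, τ) dτ` is a bounded linear operator. On `C(X, E)` with
`X` compact, the superposition operator of a function that is `C¹` in its second variable is
Fréchet differentiable, with derivative the pointwise application of `f_{0,1}(·, y(·))`: the mean
value inequality reduces the remainder estimate to the continuity of `y ↦ f_{0,1}(·, y(·))`, which
is itself a superposition operator with continuous kernel. The integrand of `J` is extended off
`∠_T` by a continuous retraction of `ℝ²` onto `∠_T`, so that continuity of `J g` follows from the
continuity of parametric interval integrals. -/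

open MeasureTheory
open scoped Classical

/-- The compact triangle `∠_T = {(s,t) ∈ [0,T]² : s ≤ t}`. -/
def triangle (T : ℝ) : Set (ℝ × ℝ) := {p | 0 ≤ p.1 ∧ p.1 ≤ p.2 ∧ p.2 ≤ T}

theorem isCompact_triangle (T : ℝ) : IsCompact (triangle T) := by
  have hclosed : IsClosed (triangle T) := by
    have : triangle T =
        {p : ℝ × ℝ | 0 ≤ p.1} ∩ ({p : ℝ × ℝ | p.1 ≤ p.2} ∩ {p : ℝ × ℝ | p.2 ≤ T}) := by
      ext p; simp [triangle, Set.mem_inter_iff, and_assoc]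
    rw [this]
    exact (isClosed_le continuous_const continuous_fst).inter
      ((isClosed_le continuous_fst continuous_snd).inter
        (isClosed_le continuous_snd continuous_const))
  refine (isCompact_Icc.prod isCompact_Icc :
      IsCompact (Set.Icc (0 : ℝ) T ×ˢ Set.Icc (0 : ℝ) T)).of_isClosed_subset hclosed ?_
  rintro ⟨s, t⟩ ⟨h1, h2, h3⟩
  exact ⟨⟨h1, h2.trans h3⟩, ⟨h1.trans h2, h3⟩⟩

instance (T : ℝ) : CompactSpace (triangle T) :=
  isCompact_iff_compactSpace.mp (isCompact_triangle T)

open Set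

namespace intervalIntegral

variable {X E : Type*} [TopologicalSpace X] [NormedAddCommGroup E] [NormedSpace ℝ E]

theorem continuous_parametric_intervalIntegral_of_continuous_limits {Φ : X → ℝ → E}
    (hΦ : Continuous (Function.uncurry Φ)) {a b : X → ℝ} (ha : Continuous a) (hb : Continuous b) :
    Continuous fun x => ∫ t in a x..b x, Φ x t := by
  have hint (x : X) (c d : ℝ) : IntervalIntegrable (Φ x) volume c d :=
    (hΦ.uncurry_left x).intervalIntegrable c d
  have hcont : Continuous fun x => (∫ t in (0 : ℝ)..b x, Φ x t) - ∫ t in (0 : ℝ)..a x, Φ x t :=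
    (continuous_parametric_intervalIntegral_of_continuous hΦ hb).sub
      (continuous_parametric_intervalIntegral_of_continuous hΦ ha)
  refine hcont.congr fun x => ?_
  exact integral_interval_sub_left (hint x 0 (b x)) (hint x 0 (a x))

end intervalIntegral

namespace ContinuousMap

section PointwiseApply

variable {X 𝕜 E F : Type*} [TopologicalSpace X] [CompactSpace X] [NontriviallyNormedField 𝕜]
  [NormedAddCommGroup E] [NormedSpace 𝕜 E] [NormedAddCommGroup F] [NormedSpace 𝕜 F]

noncomputable def pointwiseApply : C(X, E →L[𝕜] F) →L[𝕜] C(X, E) →L[𝕜] C(X, F) :=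
  LinearMap.mkContinuous₂
    (LinearMap.mk₂ 𝕜 (fun (A : C(X, E →L[𝕜] F)) (h : C(X, E)) =>
        (⟨fun x => A x (h x), A.continuous.clm_apply h.continuous⟩ : C(X, F)))
      (fun _ _ _ => by ext; simp) (fun _ _ _ => by ext; simp)
      (fun _ _ _ => by ext; simp) (fun _ _ _ => by ext; simp))
    1 fun A h => (ContinuousMap.norm_le _ (by positivity)).2 fun x =>
      calc ‖A x (h x)‖ ≤ ‖A x‖ * ‖h x‖ := (A x).le_opNorm (h x)
        _ ≤ 1 * ‖A‖ * ‖h‖ := by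
          rw [one_mul]
          gcongr <;> apply norm_coe_le_norm

@[simp]
theorem pointwiseApply_apply (A : C(X, E →L[𝕜] F)) (h : C(X, E)) (x : X) :
    pointwiseApply A h x = A x (h x) :=
  rfl

end PointwiseApply

section Superposition

variable {X Y Z : Type*} [TopologicalSpace X] [TopologicalSpace Y] [TopologicalSpace Z]

def superposition (g : C(X × Y, Z)) (y : C(X, Y)) : C(X, Z) :=
  g.comp ((ContinuousMap.id X).prodMk y)

@[simp]
theorem superposition_apply (g : C(X × Y, Z)) (y : C(X, Y)) (x : X) :
    superposition g y x = g (x, y x) :=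
  rfl

end Superposition

variable {X E F : Type*} [TopologicalSpace X] [CompactSpace X]
  [NormedAddCommGroup E] [NormedAddCommGroup F]

theorem continuous_superposition (g : C(X × E, F)) : Continuous (superposition g) :=
  continuous_of_continuous_uncurry _ (g.continuous.comp (continuous_snd.prodMk continuous_eval))

variable [NormedSpace ℝ E] [NormedSpace ℝ F]

theorem hasFDerivAt_superposition (g : C(X × E, F)) (g' : C(X × E, E →L[ℝ] F))
    (hg : ∀ x v, HasFDerivAt (fun w => g (x, w)) (g' (x, v)) v) (y : C(X, E)) :
    HasFDerivAt (superposition g) (pointwiseApply (superposition g' y)) y := by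
  rw [hasFDerivAt_iff_isLittleO_nhds_zero, Asymptotics.isLittleO_iff]
  intro ε hε
  obtain ⟨δ, hδ, hg'δ⟩ := Metric.continuousAt_iff.1
    (continuous_superposition g').continuousAt ε hε
  filter_upwards [Metric.ball_mem_nhds (0 : C(X, E)) hδ] with h hh
  rw [mem_ball_zero_iff] at hh
  refine (ContinuousMap.norm_le _ (by positivity)).2 fun x => ?_
  have hbound : ∀ w ∈ Metric.closedBall (y x) ‖h‖, ‖g' (x, w) - g' (x, y x)‖ ≤ ε := by
    intro w hw
    -- `y + c` takes the value `w` at `x`.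
    set c := const X (w - y x)
    have hc : dist (y + c) y < δ := by
      rw [dist_self_add_left]
      exact ((ContinuousMap.norm_le _ (norm_nonneg _)).2 fun _ => le_rfl).trans_lt
        ((mem_closedBall_iff_norm.1 hw).trans_lt hh)
    calc ‖g' (x, w) - g' (x, y x)‖
        = dist (superposition g' (y + c) x) (superposition g' y x) := by
          rw [dist_eq_norm]; simp [c]
      _ ≤ dist (superposition g' (y + c)) (superposition g' y) := dist_apply_le_dist x
      _ ≤ ε := (hg'δ hc).le
  have hmvt := (convex_closedBall (y x) ‖h‖).norm_image_sub_le_of_norm_hasFDerivWithin_le'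
    (fun w _ => (hg x w).hasFDerivWithinAt) hbound (Metric.mem_closedBall_self (norm_nonneg _))
    (show y x + h x ∈ Metric.closedBall (y x) ‖h‖ by simpa using h.norm_coe_le_norm x)
  simp only [add_sub_cancel_left] at hmvt
  simpa using hmvt.trans (mul_le_mul_of_nonneg_left (h.norm_coe_le_norm x) hε.le)

end ContinuousMap

section Triangle

variable {T : ℝ}

theorem snd_mem_Icc_of_mem_triangle {p : ℝ × ℝ} (hp : p ∈ triangle T) : p.2 ∈ Icc 0 T :=
  ⟨hp.1.trans hp.2.1, hp.2.2⟩

theorem mk_mem_triangle_of_mem_uIcc {p : ℝ × ℝ} (hp : p ∈ triangle T) {τ : ℝ}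
    (hτ : τ ∈ uIcc p.1 p.2) : (p.1, τ) ∈ triangle T := by
  rw [uIcc_of_le hp.2.1] at hτ
  exact ⟨hp.1, hτ.1, hτ.2.trans hp.2.2⟩

def triangleRetraction (hT : 0 ≤ T) : C(ℝ × ℝ, triangle T) where
  toFun p := ⟨(max 0 (min p.1 T), max (max 0 (min p.1 T)) (min p.2 T)),
    le_max_left _ _, le_max_left _ _, max_le (max_le hT (min_le_right _ _)) (min_le_right _ _)⟩
  continuous_toFun := by fun_prop

theorem triangleRetraction_of_mem (hT : 0 ≤ T) {p : ℝ × ℝ} (hp : p ∈ triangle T) :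
    triangleRetraction hT p = ⟨p, hp⟩ := by
  obtain ⟨h0, h1, h2⟩ := hp
  have hs : max 0 (min p.1 T) = p.1 := by
    rw [min_eq_left (h1.trans h2), max_eq_right h0]
  ext
  · exact hs
  · change max (max 0 (min p.1 T)) (min p.2 T) = p.2
    rw [hs, min_eq_left h2, max_eq_right h1]

variable {V : Type*} [NormedAddCommGroup V]

theorem intervalIntegrable_triangleRetraction (hT : 0 ≤ T) (g : C(triangle T, V)) (s a b : ℝ) :
    IntervalIntegrable (fun τ => g (triangleRetraction hT (s, τ))) volume a b :=
  (by fun_prop : Continuous fun τ => g (triangleRetraction hT (s, τ))).intervalIntegrable a b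

variable [NormedSpace ℝ V]

noncomputable def triangleIntegral (hT : 0 ≤ T) : C(triangle T, V) →L[ℝ] C(triangle T, V) :=
  LinearMap.mkContinuous
    { toFun := fun g =>
        ⟨fun p => ∫ τ in (p : ℝ × ℝ).1..(p : ℝ × ℝ).2,
            g (triangleRetraction hT ((p : ℝ × ℝ).1, τ)),
          intervalIntegral.continuous_parametric_intervalIntegral_of_continuous_limits
            (by fun_prop) (by fun_prop) (by fun_prop)⟩
      map_add' := fun g₁ g₂ => by
        ext p
        exact intervalIntegral.integral_add (intervalIntegrable_triangleRetraction hT g₁ _ _ _)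
          (intervalIntegrable_triangleRetraction hT g₂ _ _ _)
      map_smul' := fun c g => by
        ext p
        exact intervalIntegral.integral_smul c _ }
    T fun g => by
      refine (ContinuousMap.norm_le _ (by positivity)).2 fun p => ?_
      obtain ⟨h0, h1, h2⟩ := p.2
      calc _ ≤ ‖g‖ * |(p : ℝ × ℝ).2 - (p : ℝ × ℝ).1| :=
            intervalIntegral.norm_integral_le_of_norm_le_const fun τ _ => g.norm_coe_le_norm _
        _ ≤ T * ‖g‖ := by
          rw [abs_of_nonneg (sub_nonneg.2 h1), mul_comm]
          exact mul_le_mul_of_nonneg_right (by linarith) (norm_nonneg g)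

theorem triangleIntegral_apply (hT : 0 ≤ T) (g : C(triangle T, V)) (p : triangle T) :
    triangleIntegral hT g p = ∫ τ in (p : ℝ × ℝ).1..(p : ℝ × ℝ).2,
      (if hτ : ((p : ℝ × ℝ).1, τ) ∈ triangle T then g ⟨_, hτ⟩ else 0) := by
  refine intervalIntegral.integral_congr fun τ hτ => ?_
  have hm := mk_mem_triangle_of_mem_uIcc p.2 hτ
  simp only [dif_pos hm, triangleRetraction_of_mem hT hm]

end Triangle

theorem integral_operator_c1_general
    {V : Type*} [NormedAddCommGroup V] [NormedSpace ℝ V]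
    {T : ℝ} (hT : 0 < T)
    (f : ℝ → V → V) (f' : ℝ → V → V →L[ℝ] V)
    (hf : ContinuousOn (fun p : ℝ × V => f p.1 p.2) (Set.Icc 0 T ×ˢ Set.univ))
    (hdiff : ∀ t ∈ Set.Icc (0 : ℝ) T, ∀ x : V, HasFDerivAt (f t) (f' t x) x)
    (hf' : ContinuousOn (fun p : ℝ × V => f' p.1 p.2) (Set.Icc 0 T ×ˢ Set.univ))
    (F : C(triangle T, V) → C(triangle T, V))
    (hF : ∀ (y : C(triangle T, V)) (p : triangle T),
      F y p = ∫ τ in (p : ℝ × ℝ).1..(p : ℝ × ℝ).2,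
        (if hτ : ((p : ℝ × ℝ).1, τ) ∈ triangle T then f τ (y ⟨_, hτ⟩) else 0)) :
    ∃ D : C(triangle T, V) → C(triangle T, V) →L[ℝ] C(triangle T, V),
      Continuous D ∧
      (∀ y : C(triangle T, V), HasFDerivAt F (D y) y) ∧
      ∀ (y h : C(triangle T, V)) (p : triangle T),
        D y h p = ∫ τ in (p : ℝ × ℝ).1..(p : ℝ × ℝ).2,
          (if hτ : ((p : ℝ × ℝ).1, τ) ∈ triangle T
            then f' τ (y ⟨_, hτ⟩) (h ⟨_, hτ⟩) else 0) := by
  have hmem (z : triangle T × V) : ((z.1 : ℝ × ℝ).2, z.2) ∈ Icc 0 T ×ˢ univ :=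
    ⟨snd_mem_Icc_of_mem_triangle z.1.2, trivial⟩
  let g : C(triangle T × V, V) := ⟨fun z => f (z.1 : ℝ × ℝ).2 z.2,
    hf.comp_continuous (by fun_prop) hmem⟩
  let g' : C(triangle T × V, V →L[ℝ] V) := ⟨fun z => f' (z.1 : ℝ × ℝ).2 z.2,
    hf'.comp_continuous (by fun_prop) hmem⟩
  have hF_eq : F = triangleIntegral hT.le ∘ ContinuousMap.superposition g := by
    funext y; ext p
    rw [hF, Function.comp_apply, triangleIntegral_apply]
    rfl
  refine ⟨fun y => (triangleIntegral hT.le).comp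
    (ContinuousMap.pointwiseApply (ContinuousMap.superposition g' y)), ?_, fun y => ?_,
    fun y h p => triangleIntegral_apply _ _ p⟩
  · exact continuous_const.clm_comp
      (ContinuousMap.pointwiseApply.continuous.comp (ContinuousMap.continuous_superposition g'))
  · rw [hF_eq]
    exact (triangleIntegral hT.le).hasFDerivAt.comp y
      (ContinuousMap.hasFDerivAt_superposition g g'
        (fun z v => hdiff _ (snd_mem_Icc_of_mem_triangle z.2) v) y)

/-- The nonlinear integral operator
`(F(y))(s,t) = ∫_s^t f(τ, y(s,τ)) dτ` on `C(∠_T, V)` is continuously Fréchet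
differentiable with `(F'(y)h)(s,t) = ∫_s^t f_{0,1}(τ, y(s,τ)) h(s,τ) dτ`. -/
theorem integral_operator_c1
    {V : Type*} [NormedAddCommGroup V] [NormedSpace ℝ V] [CompleteSpace V]
    [Nontrivial V] {T : ℝ} (hT : 0 < T)
    (f : ℝ → V → V) (f' : ℝ → V → V →L[ℝ] V)
    (hf : ContinuousOn (fun p : ℝ × V => f p.1 p.2) (Set.Icc 0 T ×ˢ Set.univ))
    (hdiff : ∀ t ∈ Set.Icc (0 : ℝ) T, ∀ x : V, HasFDerivAt (f t) (f' t x) x)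
    (hf' : ContinuousOn (fun p : ℝ × V => f' p.1 p.2) (Set.Icc 0 T ×ˢ Set.univ))
    (F : C(triangle T, V) → C(triangle T, V))
    (hF : ∀ (y : C(triangle T, V)) (p : triangle T),
      F y p = ∫ τ in (p : ℝ × ℝ).1..(p : ℝ × ℝ).2,
        (if hτ : ((p : ℝ × ℝ).1, τ) ∈ triangle T then f τ (y ⟨_, hτ⟩) else 0)) :
    ∃ D : C(triangle T, V) → C(triangle T, V) →L[ℝ] C(triangle T, V),
      Continuous D ∧
      (∀ y : C(triangle T, V), HasFDerivAt F (D y) y) ∧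
      ∀ (y h : C(triangle T, V)) (p : triangle T),
        D y h p = ∫ τ in (p : ℝ × ℝ).1..(p : ℝ × ℝ).2,
          (if hτ : ((p : ℝ × ℝ).1, τ) ∈ triangle T
            then f' τ (y ⟨_, hτ⟩) (h ⟨_, hτ⟩) else 0) :=
  integral_operator_c1_general hT f f' hf hdiff hf' F hF
end

section
/- Let X, Y, Z be nontrivial real Banach spaces, f ∈ C(X, Y), g ∈ C¹(Y, Z), assume g ∘ f ∈ C¹(X, Z), and assume that for every x ∈ X the operator g'(f(x)) ∈ L(Y,Z) is bijective with bounded inverse [g'(f(x))]⁻¹ ∈ L(Z,Y). Then f ∈ C¹(X, Y) and for all x ∈ X, f'(x) = [g'(f(x))]⁻¹ ∘ (g ∘ f)'(x). -/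
/-! Near `f x`, the inverse function theorem gives a `C¹` local inverse `h` of `g`; since `f` is
continuous, `f = h ∘ (g ∘ f)` near `x`, so `f` is `C¹` as a composition of `C¹` maps. The formula
for `f'` is then the chain rule for `g ∘ f` solved for `f'`. -/

open Filter Topology

theorem ContDiffAt.of_comp_of_hasFDerivAt_equiv {𝕂 : Type*} [RCLike 𝕂]
    {X E F : Type*} [NormedAddCommGroup X] [NormedSpace 𝕂 X]
    [NormedAddCommGroup E] [NormedSpace 𝕂 E] [CompleteSpace E]
    [NormedAddCommGroup F] [NormedSpace 𝕂 F]
    {n : WithTop ℕ∞} {f : X → E} {g : E → F} {g' : E ≃L[𝕂] F} {x : X}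
    (hg : ContDiffAt 𝕂 n g (f x)) (hg' : HasFDerivAt g (g' : E →L[𝕂] F) (f x)) (hn : n ≠ 0)
    (hf : ContinuousAt f x) (hgf : ContDiffAt 𝕂 n (g ∘ f) x) :
    ContDiffAt 𝕂 n f x := by
  have h_inv_smooth := hg.to_localInverse hg' hn
  have h_left_inv : ∀ᶠ y in 𝓝 (f x), hg.localInverse hg' hn (g y) = y :=
    (hg.hasStrictFDerivAt' hg' hn).eventually_left_inverse
  have h_eq : hg.localInverse hg' hn ∘ (g ∘ f) =ᶠ[𝓝 x] f := hf.eventually h_left_inv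
  exact (h_inv_smooth.comp x hgf).congr_of_eventuallyEq h_eq.symm

theorem fderiv_eq_comp_fderiv_comp_of_leftInverse {𝕜 : Type*} [NontriviallyNormedField 𝕜]
    {X E F : Type*} [NormedAddCommGroup X] [NormedSpace 𝕜 X]
    [NormedAddCommGroup E] [NormedSpace 𝕜 E] [NormedAddCommGroup F] [NormedSpace 𝕜 F]
    {f : X → E} {g : E → F} {x : X} {i : F →L[𝕜] E}
    (hf : DifferentiableAt 𝕜 f x) (hg : DifferentiableAt 𝕜 g (f x))
    (hi : i.comp (fderiv 𝕜 g (f x)) = ContinuousLinearMap.id 𝕜 E) :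
    fderiv 𝕜 f x = i.comp (fderiv 𝕜 (g ∘ f) x) := by
  rw [fderiv_comp x hg hf, ← ContinuousLinearMap.comp_assoc, hi, ContinuousLinearMap.id_comp]

theorem converse_chain_rule_general
    {X Y Z : Type*} [NormedAddCommGroup X] [NormedSpace ℝ X]
    [NormedAddCommGroup Y] [NormedSpace ℝ Y] [CompleteSpace Y]
    [NormedAddCommGroup Z] [NormedSpace ℝ Z]
    (f : X → Y) (g : Y → Z) (hf : Continuous f) (hg : ContDiff ℝ 1 g)
    (hgf : ContDiff ℝ 1 (g ∘ f))
    (i : X → Z →L[ℝ] Y)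
    (hinv₁ : ∀ x : X, (i x).comp (fderiv ℝ g (f x)) = ContinuousLinearMap.id ℝ Y)
    (hinv₂ : ∀ x : X, (fderiv ℝ g (f x)).comp (i x) = ContinuousLinearMap.id ℝ Z) :
    ContDiff ℝ 1 f ∧ ∀ x : X, fderiv ℝ f x = (i x).comp (fderiv ℝ (g ∘ f) x) := by
  have hg_diff : Differentiable ℝ g := hg.differentiable one_ne_zero
  have hf_smooth : ContDiff ℝ 1 f := contDiff_iff_contDiffAt.2 fun x ↦
    hg.contDiffAt.of_comp_of_hasFDerivAt_equiv
      (g' := .equivOfInverse' _ _ (hinv₂ x) (hinv₁ x)) (hg_diff (f x)).hasFDerivAt one_ne_zero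
      hf.continuousAt hgf.contDiffAt
  exact ⟨hf_smooth, fun x ↦ fderiv_eq_comp_fderiv_comp_of_leftInverse
    (hf_smooth.differentiable one_ne_zero x) (hg_diff (f x)) (hinv₁ x)⟩

/-- Converse chain rule: if `f` is continuous, `g` is `C¹`,
`g ∘ f` is `C¹`, and each `g'(f(x))` is a bijective bounded operator with bounded
inverse `i x`, then `f` is `C¹` and `f'(x) = [g'(f(x))]⁻¹ ∘ (g ∘ f)'(x)`. -/
theorem converse_chain_rule
    {X Y Z : Type*} [NormedAddCommGroup X] [NormedSpace ℝ X] [CompleteSpace X]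
    [Nontrivial X] [NormedAddCommGroup Y] [NormedSpace ℝ Y] [CompleteSpace Y]
    [Nontrivial Y] [NormedAddCommGroup Z] [NormedSpace ℝ Z] [CompleteSpace Z]
    [Nontrivial Z]
    (f : X → Y) (g : Y → Z) (hf : Continuous f) (hg : ContDiff ℝ 1 g)
    (hgf : ContDiff ℝ 1 (g ∘ f))
    (i : X → Z →L[ℝ] Y)
    (hinv₁ : ∀ x : X, (i x).comp (fderiv ℝ g (f x)) = ContinuousLinearMap.id ℝ Y)
    (hinv₂ : ∀ x : X, (fderiv ℝ g (f x)).comp (i x) = ContinuousLinearMap.id ℝ Z) :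
    ContDiff ℝ 1 f ∧ ∀ x : X, fderiv ℝ f x = (i x).comp (fderiv ℝ (g ∘ f) x) :=
  converse_chain_rule_general f g hf hg hgf i hinv₁ hinv₂
end
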